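/- For every edge e ∈ E with head v, the number σ(e) of occurrences of e in the T-trace cycle satisfies σ(e) = 1 − |{u ∈ {1, …, n} : S(u) = v}| + Σ_{e′ ∈ δ⁺(v)} σ(e′), where δ⁺(v) is the set of edges of E with tail v. -/

import Mathlib

/-- `heapHList T i = [h_0, h_1, …, h_i]`: `h_0 = ε` and `h_i` is the shortest
prefix of `T[i:]` (the suffix of `T` starting at 1-indexed position `i`) not
among `h_0, …, h_{i-1}` (falling back to `T[i:]` itself if every prefix
already occurs there). -/
def heapHList {α : Type*} [DecidableEq α] (T : List α) : ℕ → List (List α)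
  | 0 => [[]]
  | i + 1 =>
    let prev := heapHList T i
    let suf := T.drop i
    prev ++ [(((List.range (suf.length + 1)).find?
        (fun k => decide (suf.take k ∉ prev))).elim suf fun k => suf.take k)]

/-- `heapH T i = h_i`. -/
def heapH {α : Type*} [DecidableEq α] (T : List α) (i : ℕ) : List α :=
  (heapHList T i).getD i []

/-- `T` ends with a letter that occurs nowhere else in `T`
(1-indexed: `T[i] ≠ T[n]` for all `1 ≤ i ≤ n - 1`). -/
def EndsUnique {α : Type*} (T : List α) : Prop :=
  ∀ i, i + 1 < T.length → T[i]? ≠ T[T.length - 1]?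

open scoped Classical

/-- `p` is a directed path (a list of consecutive arcs) from `a` to `b` in the
graph whose edge relation is `E`. -/
def IsArcPath {V : Type*} (E : V → V → Prop) : List (V × V) → V → V → Prop
  | [], a, b => a = b
  | e :: p, a, b => e.1 = a ∧ E e.1 e.2 ∧ IsArcPath E p e.2 b

/-- The edge relation of `PH(T)` on the nodes `{0, …, n}` (`n = |T|`). -/
def phEdge {α : Type*} [DecidableEq α] (T : List α) (i j : ℕ) : Prop :=
  i ≤ T.length ∧ j ≤ T.length ∧ ∃ c : α, heapH T i ++ [c] = heapH T j

/-- `p` is the `T`-trace cycle `p_0 · f_1 · p_1 ⋯ f_{n-1} · p_{n-1} · f_n` of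
`PHS(T)` (arcs are pairs of nodes): `f_i = (i, S i)`, `p_0` is the `E`-path
from `0` to `1`, and `p_i` is the `E`-path from `S i` to `i + 1`. -/
def IsTraceCycle {α : Type*} [DecidableEq α] (T : List α) (S : ℕ → ℕ)
    (p : List (ℕ × ℕ)) : Prop :=
  ∃ q : ℕ → List (ℕ × ℕ),
    p = (List.range T.length).flatMap (fun i => q i ++ [(i + 1, S (i + 1))]) ∧
    IsArcPath (phEdge T) (q 0) 0 1 ∧
    (∀ i, 1 ≤ i → i + 1 ≤ T.length → IsArcPath (phEdge T) (q i) (S i) (i + 1))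

section Aux

variable {α : Type*} [DecidableEq α] (T : List α)

lemma heapHList_succ_def (i : ℕ) :
    heapHList T (i+1) = heapHList T i ++
      [(((List.range ((T.drop i).length + 1)).find?
        (fun k => decide ((T.drop i).take k ∉ heapHList T i))).elim (T.drop i)
          fun k => (T.drop i).take k)] := rfl

lemma heapHList_length (i : ℕ) : (heapHList T i).length = i + 1 := by
  induction i with
  | zero => rfl
  | succ i ih => rw [heapHList_succ_def]; simp [ih]

lemma heapH_succ_eq (i : ℕ) :
    heapH T (i+1) = (((List.range ((T.drop i).length + 1)).find?
        (fun k => decide ((T.drop i).take k ∉ heapHList T i))).elim (T.drop i)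
          fun k => (T.drop i).take k) := by
  rw [heapH, heapHList_succ_def, List.getD_eq_getElem?_getD,
    List.getElem?_append_right (by simp [heapHList_length])]
  simp [heapHList_length]

lemma heapHList_succ (i : ℕ) :
    heapHList T (i + 1) = heapHList T i ++ [heapH T (i + 1)] := by
  rw [heapHList_succ_def, heapH_succ_eq]

lemma heapHList_getD (i j : ℕ) (h : j ≤ i) :
    (heapHList T i).getD j [] = heapH T j := by
  induction i with
  | zero => interval_cases j; rfl
  | succ i ih =>
    rcases Nat.lt_or_ge j (i+1) with hj | hj
    · rw [heapHList_succ, List.getD_eq_getElem?_getD,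
        List.getElem?_append_left (by simp [heapHList_length]; omega),
        ← List.getD_eq_getElem?_getD, ih (by omega)]
    · have : j = i + 1 := by omega
      subst this; rfl

lemma heapH_zero : heapH T 0 = [] := rfl

lemma heapH_succ_prefix (i : ℕ) : heapH T (i+1) <+: T.drop i := by
  rw [heapH_succ_eq]
  cases hf : (List.range ((T.drop i).length + 1)).find?
      (fun k => decide ((T.drop i).take k ∉ heapHList T i)) with
  | none => simp
  | some k => simp [List.take_prefix]

lemma heapH_mem_heapHList (i j : ℕ) (h : j ≤ i) : heapH T j ∈ heapHList T i := by
  rw [← heapHList_getD T i j h, List.getD_eq_getElem?_getD,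
    List.getElem?_eq_getElem (by rw [heapHList_length]; omega)]
  simp only [Option.getD_some]
  exact List.getElem_mem _

lemma heapHList_getElem (i j : ℕ) (hj : j < (heapHList T i).length) :
    (heapHList T i)[j] = heapH T j := by
  have := heapHList_getD T i j (by rw [heapHList_length] at hj; omega)
  rw [List.getD_eq_getElem?_getD, List.getElem?_eq_getElem hj] at this
  simpa using this

lemma drop_not_mem (hu : EndsUnique T) {i : ℕ} (h : i + 1 ≤ T.length) :
    T.drop i ∉ heapHList T i := by
  intro hmem
  obtain ⟨j, hj, hje⟩ := List.mem_iff_getElem.mp hmem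
  rw [heapHList_getElem] at hje
  have hji : j < i + 1 := by have := hj; rwa [heapHList_length] at this
  match j with
  | 0 =>
    have := congrArg List.length hje
    simp [heapH, heapHList] at this
    omega
  | j' + 1 =>
    have hpre : T.drop i <+: T.drop j' := hje ▸ heapH_succ_prefix T j'
    set m := T.length - i - 1 with hm
    have hlen : (T.drop i).length = T.length - i := List.length_drop
    have hmlt : m < (T.drop i).length := by omega
    have e2 : (T.drop i)[m] = (T.drop j')[m]'(by simpa using hpre.length_le.trans_lt' hmlt) :=
      hpre.getElem hmlt
    rw [List.getElem_drop, List.getElem_drop] at e2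
    have hji' : j' + 1 ≤ i := by omega
    have := hu (j' + m) (by omega)
    apply this
    rw [List.getElem?_eq_getElem (by omega), List.getElem?_eq_getElem (by omega)]
    have : i + m = T.length - 1 := by omega
    congr 1
    · exact e2.symm.trans (by congr 1 <;> omega)

lemma heapH_not_mem (hu : EndsUnique T) {i : ℕ} (h1 : 1 ≤ i) (h2 : i ≤ T.length) :
    heapH T i ∉ heapHList T (i - 1) := by
  obtain ⟨i', rfl⟩ : ∃ i', i = i' + 1 := ⟨i - 1, by omega⟩
  simp only [Nat.add_sub_cancel]
  rw [heapH_succ_eq]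
  cases hf : (List.range ((T.drop i').length + 1)).find?
      (fun k => decide ((T.drop i').take k ∉ heapHList T i')) with
  | none => simpa using drop_not_mem T hu (by omega)
  | some k =>
    have := List.find?_some hf
    simpa using this

lemma heapH_inj (hu : EndsUnique T) {i j : ℕ} (hij : j < i) (hi : i ≤ T.length) :
    heapH T i ≠ heapH T j := by
  intro heq
  have hmem : heapH T j ∈ heapHList T (i - 1) := heapH_mem_heapHList T _ _ (by omega)
  rw [← heq] at hmem
  exact heapH_not_mem T hu (by omega) hi hmem


lemma phEdge_head_pos {u v : ℕ} (h : phEdge T u v) : 1 ≤ v := by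
  obtain ⟨-, -, c, hc⟩ := h
  rcases Nat.eq_zero_or_pos v with rfl | hv
  · rw [heapH_zero] at hc; simp at hc
  · exact hv

lemma phEdge_parent_unique (hu : EndsUnique T) {u u' v : ℕ}
    (h : phEdge T u v) (h' : phEdge T u' v) : u = u' := by
  obtain ⟨hun, -, c, hc⟩ := h
  obtain ⟨hun', -, c', hc'⟩ := h'
  have : heapH T u = heapH T u' := by
    have := hc.trans hc'.symm
    simpa using (List.append_inj' this rfl).1
  by_contra hne
  rcases Nat.lt_or_ge u u' with hlt | hge
  · exact heapH_inj T hu hlt hun' this.symm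
  · exact heapH_inj T hu (by omega) hun this

-- arcs of an E-path are E-edges
lemma IsArcPath.mem_edge {V : Type*} {E : V → V → Prop} :
    ∀ {p : List (V × V)} {a b : V}, IsArcPath E p a b → ∀ e ∈ p, E e.1 e.2 := by
  intro p
  induction p with
  | nil => intro a b h e he; simp at he
  | cons f p ih =>
    intro a b h e he
    obtain ⟨h1, h2, h3⟩ := h
    rcases List.mem_cons.mp he with rfl | he'
    · exact h2
    · exact ih h3 e he'

lemma IsArcPath.append {V : Type*} {E : V → V → Prop} :
    ∀ {p q : List (V × V)} {a b c : V},
      IsArcPath E p a b → IsArcPath E q b c → IsArcPath E (p ++ q) a c := by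
  intro p
  induction p with
  | nil => intro q a b c h h'; cases h; simpa using h'
  | cons f p ih =>
    intro q a b c h h'
    obtain ⟨h1, h2, h3⟩ := h
    exact ⟨h1, h2, ih h3 h'⟩

lemma IsArcPath.mono {V : Type*} {E E' : V → V → Prop} (hE : ∀ x y, E x y → E' x y) :
    ∀ {p : List (V × V)} {a b : V}, IsArcPath E p a b → IsArcPath E' p a b := by
  intro p
  induction p with
  | nil => intro a b h; exact h
  | cons f p ih =>
    intro a b h
    obtain ⟨h1, h2, h3⟩ := h
    exact ⟨h1, hE _ _ h2, ih h3⟩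

-- balance equation for a walk
lemma walk_balance {V : Type*} [DecidableEq V] :
    ∀ (p : List (V × V)) (a b v : V), IsArcPath (fun _ _ => True) p a b →
      (p.filter (fun e => e.2 = v)).length + (if v = a then 1 else 0)
        = (p.filter (fun e => e.1 = v)).length + (if v = b then 1 else 0) := by
  intro p
  induction p with
  | nil =>
    intro a b v h
    cases h
    simp
  | cons f p ih =>
    intro a b v h
    obtain ⟨h1, -, h3⟩ := h
    have H := ih f.2 b v h3
    subst h1
    have hA : ((f :: p).filter (fun e => e.2 = v)).length
        = (p.filter (fun e => e.2 = v)).length + (if v = f.2 then 1 else 0) := by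
      rw [List.filter_cons]
      by_cases h : f.2 = v
      · simp [h]
      · simp [h, Ne.symm h]
    have hB : ((f :: p).filter (fun e => e.1 = v)).length
        = (p.filter (fun e => e.1 = v)).length + (if v = f.1 then 1 else 0) := by
      rw [List.filter_cons]
      by_cases h : f.1 = v
      · simp [h]
      · simp [h, Ne.symm h]
    rw [hA, hB]
    by_cases h2 : v = f.2 <;> by_cases hb : v = b <;>
      simp [h2, hb] at H ⊢ <;> omega

lemma filter_flatMap_range {A : Type*} (g : ℕ → List A) (pr : A → Bool) (m : ℕ) :
    (((List.range m).flatMap g).filter pr).length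
      = ∑ i ∈ Finset.range m, ((g i).filter pr).length := by
  induction m with
  | zero => simp
  | succ m ih =>
    rw [List.range_succ, List.flatMap_append, List.filter_append, List.length_append,
      Finset.sum_range_succ, ih]
    simp

lemma count_eq_filter (l : List (ℕ × ℕ)) (x : ℕ × ℕ) :
    l.count x = (l.filter (fun e => e = x)).length := by
  rw [List.count_eq_countP, List.countP_eq_length_filter]
  all_goals
    apply congrArg
    apply List.filter_congr
    intro y _
    by_cases h : y = x <;> simp [h]

lemma sum_count_tail (v : ℕ) (F : Finset ℕ) :
    ∀ (l : List (ℕ × ℕ)), (∀ e ∈ l, e.1 = v → e.2 ∈ F) →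
      ∑ w ∈ F, (l.filter (fun e => e = (v, w))).length
        = (l.filter (fun e => e.1 = v)).length := by
  intro l
  induction l with
  | nil => simp
  | cons e l ih =>
    intro h
    have hl := ih (fun e' he' => h e' (List.mem_cons_of_mem _ he'))
    have key : ∀ w, ((e :: l).filter (fun e' => e' = (v, w))).length
        = (l.filter (fun e' => e' = (v, w))).length + (if e = (v, w) then 1 else 0) := by
      intro w; rw [List.filter_cons]; by_cases h' : e = (v, w) <;> simp [h']
    rw [Finset.sum_congr rfl (fun w _ => key w), Finset.sum_add_distrib, hl]
    by_cases hv : e.1 = v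
    · have hmem : e.2 ∈ F := h e List.mem_cons_self hv
      have hsum : (∑ w ∈ F, if e = (v, w) then (1:ℕ) else 0) = 1 := by
        have hrw : ∀ w, (e = (v, w)) = (e.2 = w) := fun w => by
          rw [Prod.ext_iff]; simp [hv]
        simp only [hrw]
        rw [Finset.sum_ite_eq]
        simp [hmem]
      rw [hsum, List.filter_cons_of_pos (by simp [hv]), List.length_cons]
    · have hsum : (∑ w ∈ F, if e = (v, w) then (1:ℕ) else 0) = 0 := by
        apply Finset.sum_eq_zero
        intro w _
        rw [if_neg]
        intro h'
        exact hv (by rw [h'])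
      rw [hsum, List.filter_cons_of_neg (by simp [hv])]
      omega


end Aux

/-- For every edge `e = (u, v) ∈ E`, the number `σ(e)` of
occurrences of `e` in the `T`-trace cycle satisfies
`σ(e) = 1 − |{w ∈ {1,…,n} : S(w) = v}| + Σ_{e' ∈ δ⁺(v)} σ(e')`,
where `δ⁺(v)` is the set of edges of `E` with tail `v`.
Here `S` is any suffix-link map: `S i ∈ {0, …, n}` and `h_i = c · h_{S(i)}`
for some letter `c`, for all `1 ≤ i ≤ n`. -/
theorem statement11 {α : Type*} [DecidableEq α] (T : List α) (n : ℕ)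
    (hn : n = T.length) (hpos : 1 ≤ n) (hu : EndsUnique T)
    (S : ℕ → ℕ)
    (hS : ∀ i, 1 ≤ i → i ≤ n →
      S i ≤ n ∧ ∃ c : α, heapH T i = c :: heapH T (S i))
    (p : List (ℕ × ℕ)) (hp : IsTraceCycle T S p) :
    ∀ u v, phEdge T u v →
      (p.count (u, v) : ℤ)
        = 1 - (((Finset.Icc 1 n).filter (fun w => S w = v)).card : ℤ)
          + ∑ w ∈ (Finset.Icc 0 n).filter (fun w => phEdge T v w),
              (p.count (v, w) : ℤ) := by
  subst hn
  set N := T.length with hN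
  intro u v huv
  obtain ⟨q, hpq, hq0, hqi⟩ := hp
  subst hpq
  set g : ℕ → List (ℕ × ℕ) := fun i => q i ++ [(i + 1, S (i + 1))] with hg
  set p := (List.range N).flatMap g with hpdef
  -- basic facts about v
  have hv1 : 1 ≤ v := phEdge_head_pos T huv
  have hvN : v ≤ N := huv.2.1
  -- no coincidences between suffix arcs and relevant E-edges
  have no1 : ∀ i, 1 ≤ i → i ≤ N → (i, S i) ≠ (u, v) := by
    rintro i h1 h2 he
    have hiu : i = u := congrArg Prod.fst he
    have hSv : S i = v := congrArg Prod.snd he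
    obtain ⟨-, c', hc'⟩ := (hS i h1 h2)
    rw [hiu] at hSv hc'
    rw [hSv] at hc'
    obtain ⟨-, -, c, hc⟩ := huv
    have l1 := congrArg List.length hc
    have l2 := congrArg List.length hc'
    simp only [List.length_append, List.length_cons] at l1 l2
    omega
  have no2 : ∀ i w, 1 ≤ i → i ≤ N → phEdge T v w → (i, S i) ≠ (v, w) := by
    rintro i w h1 h2 hvw he
    have hiv : i = v := congrArg Prod.fst he
    have hSw : S i = w := congrArg Prod.snd he
    obtain ⟨-, c', hc'⟩ := (hS i h1 h2)
    rw [hiv] at hSw hc'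
    rw [hSw] at hc'
    obtain ⟨-, -, c, hc⟩ := hvw
    have l1 := congrArg List.length hc
    have l2 := congrArg List.length hc'
    simp only [List.length_append, List.length_cons] at l1 l2
    omega
  have hSN : ¬ (v = S N) := by
    intro he
    obtain ⟨-, c', hc'⟩ := hS N hpos le_rfl
    have hpre : heapH T N <+: T.drop (N - 1) := by
      obtain ⟨m, hm⟩ : ∃ m, N = m + 1 := ⟨N - 1, by omega⟩
      rw [hm]
      simpa [hm] using heapH_succ_prefix T m
    have h1 : (T.drop (N - 1)).length = 1 := by simp; omega
    have h2 : (heapH T N).length ≤ 1 := h1 ▸ hpre.length_le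
    have l2 := congrArg List.length hc'
    simp only [List.length_cons] at l2
    obtain ⟨-, -, c, hc⟩ := huv
    have l1 := congrArg List.length hc
    simp only [List.length_append, List.length_cons] at l1
    rw [he] at l1
    omega
  -- all arcs in q i are E-edges
  have hqEdge : ∀ i < N, ∀ e ∈ q i, phEdge T e.1 e.2 := by
    intro i hi e he
    rcases Nat.eq_zero_or_pos i with rfl | h1
    · exact hq0.mem_edge e he
    · exact (hqi i h1 (by omega)).mem_edge e he
  -- p is a walk from 0 to S N
  have walk : ∀ m, m ≤ N → IsArcPath (fun _ _ : ℕ => True)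
      ((List.range m).flatMap g) 0 (if m = 0 then 0 else S m) := by
    intro m
    induction m with
    | zero => intro _; exact rfl
    | succ m ih =>
      intro hm
      rw [List.range_succ, List.flatMap_append]
      refine IsArcPath.append (ih (by omega)) ?_
      have hsingle : (([m] : List ℕ).flatMap g) = q m ++ [(m + 1, S (m + 1))] := by
        simp [hg]
      rw [hsingle, if_neg (Nat.succ_ne_zero m)]
      refine IsArcPath.append ?_ ⟨rfl, trivial, rfl⟩
      rcases Nat.eq_zero_or_pos m with rfl | hm0
      · rw [if_pos rfl]
        exact IsArcPath.mono (fun _ _ _ => trivial) hq0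
      · rw [if_neg (by omega)]
        exact IsArcPath.mono (fun _ _ _ => trivial) (hqi m hm0 hm)
  -- generic split of filters over p
  have gsplit : ∀ (pr : ℕ × ℕ → Bool) i, ((g i).filter pr).length
      = ((q i).filter pr).length + (if pr (i + 1, S (i + 1)) then 1 else 0) := by
    intro pr i
    rw [hg]
    rw [List.filter_append, List.length_append]
    congr 1
    rw [List.filter_cons]
    by_cases h : pr (i + 1, S (i + 1)) <;> simp [h]
  have Ptot : ∀ pr : ℕ × ℕ → Bool, (p.filter pr).length
      = ∑ i ∈ Finset.range N,
          (((q i).filter pr).length + (if pr (i + 1, S (i + 1)) then 1 else 0)) := by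
    intro pr
    rw [hpdef, filter_flatMap_range]
    exact Finset.sum_congr rfl fun i _ => gsplit pr i
  -- Step 1 : count (u, v)
  have F1 : p.count (u, v) = ∑ i ∈ Finset.range N, ((q i).filter (fun e => e.2 = v)).length := by
    rw [count_eq_filter, Ptot]
    apply Finset.sum_congr rfl
    intro i hi
    rw [Finset.mem_range] at hi
    have hne : ((i + 1, S (i + 1)) : ℕ × ℕ) ≠ (u, v) := no1 (i + 1) (by omega) (by omega)
    rw [if_neg (by simpa using hne), Nat.add_zero]
    apply congrArg
    apply List.filter_congr
    intro e he
    have hE := hqEdge i hi e he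
    rw [decide_eq_decide]
    constructor
    · intro h'; rw [h']
    · intro h'
      have : phEdge T e.1 v := by rw [← h']; exact hE
      have := phEdge_parent_unique T hu this huv
      rw [Prod.ext_iff]
      exact ⟨this, h'⟩
  -- Step 2 : in-degree count
  have F2 : (p.filter (fun e => e.2 = v)).length
      = (∑ i ∈ Finset.range N, ((q i).filter (fun e => e.2 = v)).length)
        + ∑ i ∈ Finset.range N, (if S (i + 1) = v then 1 else 0) := by
    rw [Ptot, Finset.sum_add_distrib]
    congr 1
    apply Finset.sum_congr rfl
    intro i _
    by_cases h : S (i + 1) = v <;> simp [h]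
  -- Step 3 : out-degree count
  have F3 : (p.filter (fun e => e.1 = v)).length
      = (∑ i ∈ Finset.range N, ((q i).filter (fun e => e.1 = v)).length) + 1 := by
    rw [Ptot, Finset.sum_add_distrib]
    congr 1
    have hstep : ∀ i ∈ Finset.range N,
        (if (fun e : ℕ × ℕ => decide (e.1 = v)) (i + 1, S (i + 1)) = true then (1:ℕ) else 0)
          = (if i = v - 1 then 1 else 0) := by
      intro i _
      by_cases h : i + 1 = v
      · rw [if_pos (show i = v - 1 by omega)]
        simp [h]
      · rw [if_neg (show ¬ i = v - 1 by omega)]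
        simp [h]
    rw [Finset.sum_congr rfl hstep, Finset.sum_ite_eq',
      if_pos (by rw [Finset.mem_range]; omega)]
  -- Step 4 : balance
  have F4 : (p.filter (fun e => e.2 = v)).length = (p.filter (fun e => e.1 = v)).length := by
    have hb := walk_balance p 0 (if N = 0 then 0 else S N) v (by rw [hpdef]; exact walk N le_rfl)
    rw [if_neg (show ¬ N = 0 by omega)] at hb
    rw [if_neg (show ¬ v = 0 by omega), if_neg hSN] at hb
    omega
  -- Step 5 : the suffix-link cardinality
  have F5 : ((Finset.Icc 1 N).filter (fun w => S w = v)).card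
      = ∑ i ∈ Finset.range N, (if S (i + 1) = v then 1 else 0) := by
    have hIcc : Finset.Icc 1 N = (Finset.range N).image (· + 1) := by
      ext x
      simp only [Finset.mem_Icc, Finset.mem_image, Finset.mem_range]
      constructor
      · rintro ⟨h1, h2⟩
        exact ⟨x - 1, by omega, by omega⟩
      · rintro ⟨a, ha, rfl⟩
        omega
    rw [Finset.card_filter, hIcc, Finset.sum_image (by intro x _ y _ h; simp only at h; omega)]
  -- Step 6 : the out-edge sum
  have F6 : ∑ w ∈ (Finset.Icc 0 N).filter (fun w => phEdge T v w), p.count (v, w)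
      = ∑ i ∈ Finset.range N, ((q i).filter (fun e => e.1 = v)).length := by
    have hcnt : ∀ w ∈ (Finset.Icc 0 N).filter (fun w => phEdge T v w),
        p.count (v, w) = ∑ i ∈ Finset.range N, ((q i).filter (fun e => e = (v, w))).length := by
      intro w hw
      rw [Finset.mem_filter] at hw
      rw [count_eq_filter, Ptot]
      apply Finset.sum_congr rfl
      intro i hi
      rw [Finset.mem_range] at hi
      have hne : ((i + 1, S (i + 1)) : ℕ × ℕ) ≠ (v, w) :=
        no2 (i + 1) w (by omega) (by omega) hw.2
      rw [if_neg (by simpa using hne), Nat.add_zero]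
    rw [Finset.sum_congr rfl hcnt, Finset.sum_comm]
    apply Finset.sum_congr rfl
    intro i hi
    rw [Finset.mem_range] at hi
    apply sum_count_tail
    intro e he he1
    have hE := hqEdge i hi e he
    rw [Finset.mem_filter, Finset.mem_Icc]
    rw [he1] at hE
    exact ⟨⟨Nat.zero_le _, hE.2.1⟩, hE⟩
  -- assemble
  rw [← Nat.cast_sum]
  omega
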